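/- Contraction C1 preserves the intersection data: let A be an m×m symmetric matrix over ZMod 2 (with m ≥ 2) and let v, p be two distinct indices such that A v v = 1, A v p = 1, and A v k = 0 for every index k different from v and p (i.e., v is an odd vertex of valency 1, attached only to p). Let B be the (m−1)×(m−1) matrix obtained from A by deleting the row and column indexed by v and adding 1 to the diagonal entry at p (flipping the parity of p). Then det B = det A and rank A = rank B + 1 (so the corank is preserved). -/

import Mathlib

/-!
Listing the vertices other than `v` first and `v` last makes `A` a block matrix whose corner
`A v v = 1` is invertible. Block elimination against that corner preserves the determinant and
leaves the Schur complement next to a `1 × 1` identity block, so the rank drops by exactly one.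
Since `A` is symmetric and row `v` is the indicator of `p`, the Schur complement is the minor at
`v` minus `E_pp`, which over `ZMod 2` is the minor with the parity of `p` flipped.
-/

open Matrix Module

namespace Submodule

variable {K M N : Type*} [Field K] [AddCommGroup M] [AddCommGroup N] [Module K M] [Module K N]

def prodEquivProd (p : Submodule K M) (q : Submodule K N) : p.prod q ≃ₗ[K] p × q where
  toFun x := (⟨x.1.1, x.2.1⟩, ⟨x.1.2, x.2.2⟩)
  invFun y := ⟨(y.1.1, y.2.1), y.1.2, y.2.2⟩
  left_inv _ := rfl
  right_inv _ := rfl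
  map_add' _ _ := rfl
  map_smul' _ _ := rfl

theorem finrank_prod [FiniteDimensional K M] [FiniteDimensional K N]
    (p : Submodule K M) (q : Submodule K N) :
    finrank K (p.prod q) = finrank K p + finrank K q := by
  rw [(prodEquivProd p q).finrank_eq, Module.finrank_prod]

end Submodule

namespace Matrix

theorem rank_fromBlocks_zero_zero {K m₁ m₂ n₁ n₂ : Type*} [Field K] [Fintype n₁] [Fintype n₂]
    [Finite m₁] [Finite m₂] (A : Matrix m₁ n₁ K) (D : Matrix m₂ n₂ K) :
    (fromBlocks A 0 0 D).rank = A.rank + D.rank := by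
  have hmulVecLin : (fromBlocks A 0 0 D).mulVecLin =
      (LinearEquiv.sumArrowLequivProdArrow m₁ m₂ K K).symm.toLinearMap ∘ₗ
        (A.mulVecLin.prodMap D.mulVecLin) ∘ₗ
          (LinearEquiv.sumArrowLequivProdArrow n₁ n₂ K K).toLinearMap := by
    ext x (i | i) <;> simp [fromBlocks_mulVec] <;> rfl
  rw [rank, hmulVecLin, LinearMap.range_comp, LinearMap.range_comp, LinearEquiv.range,
    Submodule.map_top, LinearEquiv.finrank_map_eq, LinearMap.range_prodMap,
    Submodule.finrank_prod, rank, rank]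

variable {ι R : Type*} [DecidableEq ι] [CommRing R]

/-- The Schur complement of the diagonal entry `A v v`, provided `A v v = 1`. -/
def schurComplementAt (A : Matrix ι ι R) (v : ι) : Matrix {k // k ≠ v} {k // k ≠ v} R :=
  A.submatrix Subtype.val Subtype.val -
    vecMulVec (fun i : {k // k ≠ v} => A i v) (fun j : {k // k ≠ v} => A v j)

theorem submatrix_subtypeNeSumPUnit (A : Matrix ι ι R) {v : ι} (hv : A v v = 1) :
    A.submatrix (Equiv.subtypeNeSumPUnit.{0} v) (Equiv.subtypeNeSumPUnit.{0} v) =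
      fromBlocks (A.submatrix Subtype.val Subtype.val) (replicateCol Unit fun i => A i v)
        (replicateRow Unit fun j => A v j) 1 := by
  ext (i | i) (j | j) <;> simp [Equiv.subtypeNeSumPUnit, hv]

theorem det_schurComplementAt [Fintype ι] (A : Matrix ι ι R) {v : ι} (hv : A v v = 1) :
    (A.schurComplementAt v).det = A.det := by
  rw [← det_submatrix_equiv_self (Equiv.subtypeNeSumPUnit.{0} v), A.submatrix_subtypeNeSumPUnit hv,
    det_fromBlocks_one₂₂, schurComplementAt, vecMulVec_eq Unit]

theorem rank_eq_rank_schurComplementAt_add_one {K : Type*} [Field K] [Fintype ι]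
    (A : Matrix ι ι K) {v : ι} (hv : A v v = 1) :
    A.rank = (A.schurComplementAt v).rank + 1 := by
  have : Invertible (1 : Matrix Unit Unit K) := invertibleOne
  rw [← rank_submatrix A (Equiv.subtypeNeSumPUnit.{0} v) (Equiv.subtypeNeSumPUnit.{0} v),
    A.submatrix_subtypeNeSumPUnit hv, fromBlocks_eq_of_invertible₂₂, invOf_one, Matrix.mul_one,
    Matrix.one_mul, rank_mul_eq_left_of_isUnit_det _ _ (by simp),
    rank_mul_eq_right_of_isUnit_det _ _ (by simp), rank_fromBlocks_zero_zero, rank_one,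
    ← vecMulVec_eq, Fintype.card_unit, schurComplementAt]

theorem schurComplementAt_eq_sub_single (A : Matrix ι ι R) (hA : A.IsSymm) {v : ι}
    (p : {k // k ≠ v}) (hrow : ∀ j : {k // k ≠ v}, A v j = if j = p then 1 else 0) :
    A.schurComplementAt v = A.submatrix Subtype.val Subtype.val - single p p 1 := by
  ext i j
  simp only [schurComplementAt, sub_apply, vecMulVec_apply, hA.apply, hrow, single_apply]
  grind

end Matrix

theorem contraction_C1_general {m : ℕ} (A : Matrix (Fin m) (Fin m) (ZMod 2))
    (hA : A.IsSymm) (v p : Fin m) (hvp : v ≠ p)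
    (hvv : A v v = 1) (hAvp : A v p = 1)
    (hval : ∀ k, k ≠ v → k ≠ p → A v k = 0) :
    (A.submatrix (Subtype.val : {k : Fin m // k ≠ v} → Fin m) Subtype.val
        + Matrix.single (⟨p, hvp.symm⟩ : {k : Fin m // k ≠ v})
            (⟨p, hvp.symm⟩ : {k : Fin m // k ≠ v}) 1).det = A.det ∧
      A.rank = (A.submatrix (Subtype.val : {k : Fin m // k ≠ v} → Fin m) Subtype.val
        + Matrix.single (⟨p, hvp.symm⟩ : {k : Fin m // k ≠ v})
            (⟨p, hvp.symm⟩ : {k : Fin m // k ≠ v}) 1).rank + 1 := by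
  have hrow : ∀ j : {k // k ≠ v}, A v j = if j = ⟨p, hvp.symm⟩ then 1 else 0 := by
    rintro ⟨j, hjv⟩
    by_cases hjp : j = p
    · simpa [hjp] using hAvp
    · simpa [hjp] using hval j hjv hjp
  rw [← sub_neg_eq_add, single_neg, CharTwo.neg_eq, ← A.schurComplementAt_eq_sub_single hA _ hrow]
  exact ⟨A.det_schurComplementAt hvv, A.rank_eq_rank_schurComplementAt_add_one hvv⟩

/-- Contraction C1: blowing down an odd curve `v` of valency 1 attached only to `p`
(delete the row and column of `v`, flip the parity of `p`) preserves the determinant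
and drops the rank of the mod-2 intersection matrix by exactly one (so the corank is
preserved). -/
theorem contraction_C1 {m : ℕ} (hm : 2 ≤ m) (A : Matrix (Fin m) (Fin m) (ZMod 2))
    (hA : A.IsSymm) (v p : Fin m) (hvp : v ≠ p)
    (hvv : A v v = 1) (hAvp : A v p = 1)
    (hval : ∀ k, k ≠ v → k ≠ p → A v k = 0) :
    (A.submatrix (Subtype.val : {k : Fin m // k ≠ v} → Fin m) Subtype.val
        + Matrix.single (⟨p, hvp.symm⟩ : {k : Fin m // k ≠ v})
            (⟨p, hvp.symm⟩ : {k : Fin m // k ≠ v}) 1).det = A.det ∧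
      A.rank = (A.submatrix (Subtype.val : {k : Fin m // k ≠ v} → Fin m) Subtype.val
        + Matrix.single (⟨p, hvp.symm⟩ : {k : Fin m // k ≠ v})
            (⟨p, hvp.symm⟩ : {k : Fin m // k ≠ v}) 1).rank + 1 :=
  contraction_C1_general A hA v p hvp hvv hAvp hval
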